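/- Let v and w be unit vectors in ℝ³ with (v · w)² ≠ 1, and let n = v × w. Then the outer product of the normalized vector n̂ = n/‖n‖ with itself satisfies n̂ ⊗ n̂ = I - (1/(1 + v·w)) [ v ⊗ w + w ⊗ v + 2 (v−w)/‖v−w‖ ⊗ (v−w)/‖v−w‖ ]. -/

import Mathlib

open Matrix

/-- Euclidean norm on ℝ³. -/
noncomputable def enorm (v : Fin 3 → ℝ) : ℝ := Real.sqrt (v ⬝ᵥ v)

/-- Cross product on ℝ³. -/
def cross3 (a b : Fin 3 → ℝ) : Fin 3 → ℝ :=
  ![a 1 * b 2 - a 2 * b 1, a 2 * b 0 - a 0 * b 2, a 0 * b 1 - a 1 * b 0]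

/-- Skew-symmetric cross-product matrix [v]ₓ. -/
def crossMat (v : Fin 3 → ℝ) : Matrix (Fin 3) (Fin 3) ℝ :=
  !![0, -v 2, v 1; v 2, 0, -v 0; -v 1, v 0, 0]

/-- Normalization x̂ = x / ‖x‖. -/
noncomputable def hat (x : Fin 3 → ℝ) : Fin 3 → ℝ := (_root_.enorm x)⁻¹ • x

/-- Frobenius norm of a 3×3 matrix. -/
noncomputable def frobNorm (M : Matrix (Fin 3) (Fin 3) ℝ) : ℝ :=
  Real.sqrt (∑ i, ∑ j, (M i j) ^ 2)

/-! For unit vectors with `c = v ⬝ᵥ w`, expanding the dyadic square of `n = v ⨯₃ w` entrywise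
(a matrix form of Lagrange's identity) gives
`n ⊗ n = (1 - c²) I - (1 - c) (v ⊗ w + w ⊗ v) - (v - w) ⊗ (v - w)`.
Dividing by `‖n‖² = 1 - c² = (1 - c)(1 + c)`, and using `‖v - w‖² = 2 (1 - c)`, yields the formula. -/

theorem cross3_eq_crossProduct (a b : Fin 3 → ℝ) : cross3 a b = a ⨯₃ b := rfl

theorem vecMulVec_crossProduct_self {R : Type*} [CommRing R] (a b : Fin 3 → R) :
    vecMulVec (a ⨯₃ b) (a ⨯₃ b) =
      ((a ⬝ᵥ a) * (b ⬝ᵥ b) - (a ⬝ᵥ b) ^ 2) • (1 : Matrix (Fin 3) (Fin 3) R)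
        - (b ⬝ᵥ b) • vecMulVec a a - (a ⬝ᵥ a) • vecMulVec b b
        + (a ⬝ᵥ b) • (vecMulVec a b + vecMulVec b a) := by
  ext i j
  fin_cases i <;> fin_cases j <;>
    simp [cross_apply, vecMulVec_apply, vec3_dotProduct] <;> ring

theorem vecMulVec_hat_self (x : Fin 3 → ℝ) :
    vecMulVec (hat x) (hat x) = (x ⬝ᵥ x)⁻¹ • vecMulVec x x := by
  have hx : 0 ≤ x ⬝ᵥ x := by simpa using dotProduct_star_self_nonneg x
  rw [hat, _root_.enorm, vecMulVec_smul, smul_vecMulVec, smul_smul, ← mul_inv,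
    Real.mul_self_sqrt hx]

section UnitVectors

variable {v w : Fin 3 → ℝ} (hv : v ⬝ᵥ v = 1) (hw : w ⬝ᵥ w = 1)
include hv hw

theorem sub_dotProduct_sub_of_unit : (v - w) ⬝ᵥ (v - w) = 2 * (1 - v ⬝ᵥ w) := by
  rw [sub_dotProduct, dotProduct_sub, dotProduct_sub, dotProduct_comm w v, hv, hw]
  ring

theorem crossProduct_dotProduct_self_of_unit : (v ⨯₃ w) ⬝ᵥ (v ⨯₃ w) = 1 - (v ⬝ᵥ w) ^ 2 := by
  rw [cross_dot_cross, hv, hw, dotProduct_comm w v]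
  ring

theorem vecMulVec_crossProduct_self_of_unit :
    vecMulVec (v ⨯₃ w) (v ⨯₃ w) =
      (1 - (v ⬝ᵥ w) ^ 2) • (1 : Matrix (Fin 3) (Fin 3) ℝ)
        - (1 - v ⬝ᵥ w) • (vecMulVec v w + vecMulVec w v) - vecMulVec (v - w) (v - w) := by
  rw [vecMulVec_crossProduct_self, hv, hw, vecMulVec_sub, sub_vecMulVec, sub_vecMulVec]
  module

end UnitVectors

theorem normal_dyadic_formula (v w : Fin 3 → ℝ)
    (hv : _root_.enorm v = 1) (hw : _root_.enorm w = 1) (h : (v ⬝ᵥ w) ^ 2 ≠ 1) :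
    vecMulVec (hat (cross3 v w)) (hat (cross3 v w)) =
      1 - (1 / (1 + v ⬝ᵥ w)) •
        (vecMulVec v w + vecMulVec w v +
          (2 : ℝ) • vecMulVec (hat (v - w)) (hat (v - w))) := by
  have hvv : v ⬝ᵥ v = 1 := Real.sqrt_eq_one.mp hv
  have hww : w ⬝ᵥ w = 1 := Real.sqrt_eq_one.mp hw
  have hc : (1 - v ⬝ᵥ w) * (1 + v ⬝ᵥ w) ≠ 0 := by
    contrapose! h
    linear_combination -h
  have hc₁ : 1 - v ⬝ᵥ w ≠ 0 := left_ne_zero_of_mul hc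
  have hc₂ : 1 + v ⬝ᵥ w ≠ 0 := right_ne_zero_of_mul hc
  rw [cross3_eq_crossProduct, vecMulVec_hat_self, vecMulVec_hat_self,
    crossProduct_dotProduct_self_of_unit hvv hww, sub_dotProduct_sub_of_unit hvv hww,
    vecMulVec_crossProduct_self_of_unit hvv hww]
  match_scalars <;> field_simp <;> ring
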